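/- Let f : ℕ → ℝ≥0 be a function, d a positive integer, and a a positive integer. Assume f is such that for every positive integer r there exists q(r) with f(ak) ≤ f(ka+r) ≤ f((k+q(r))a) for all k. Then limsup_{m→∞} f(m)/m^d = limsup_{k→∞} f(ak)/(ak)^d. -/

import Mathlib

open Filter
open scoped NNReal ENNReal Topology

private lemma div_intro (x y z : ℝ≥0∞) (h0 : y ≠ 0) (ht : y ≠ ⊤) :
    x / z = x / y * (y / z) := by
  rw [div_eq_mul_inv, div_eq_mul_inv, div_eq_mul_inv, mul_assoc x, ← mul_assoc y⁻¹,
    ENNReal.inv_mul_cancel h0 ht, one_mul]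

private lemma ennreal_div_pow (x y : ℝ≥0∞) (d : ℕ) : x ^ d / y ^ d = (x / y) ^ d := by
  simp [div_eq_mul_inv, mul_pow, ← ENNReal.inv_pow]

theorem limsup_along_multiples (f : ℕ → ℝ≥0) (d a : ℕ) (hd : 0 < d) (ha : 0 < a)
    (h : ∀ r : ℕ, 0 < r → ∃ q : ℕ, ∀ k : ℕ,
        f (a * k) ≤ f (k * a + r) ∧ f (k * a + r) ≤ f ((k + q) * a)) :
    Filter.limsup (fun m : ℕ => (f m : ℝ≥0∞) / (m : ℝ≥0∞) ^ d) atTop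
      = Filter.limsup (fun k : ℕ => (f (a * k) : ℝ≥0∞) / ((a * k : ℕ) : ℝ≥0∞) ^ d) atTop := by
  set u : ℕ → ℝ≥0∞ := fun m : ℕ => (f m : ℝ≥0∞) / (m : ℝ≥0∞) ^ d with hu
  set v : ℕ → ℝ≥0∞ := fun k : ℕ => (f (a * k) : ℝ≥0∞) / ((a * k : ℕ) : ℝ≥0∞) ^ d with hv
  have hvu : v = u ∘ (fun k => a * k) := rfl
  -- choice of q's
  set g : ℕ → ℕ := fun r => if h' : 0 < r then (h r h').choose else 0 with hgdef
  have hg : ∀ r : ℕ, 0 < r → ∀ k : ℕ,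
      f (a * k) ≤ f (k * a + r) ∧ f (k * a + r) ≤ f ((k + g r) * a) := by
    intro r hr k
    have : g r = (h r hr).choose := by simp [hgdef, hr]
    rw [this]
    exact (h r hr).choose_spec k
  set Q : ℕ := (Finset.range a).sup g with hQdef
  have hgQ : ∀ r < a, g r ≤ Q := fun r hr => Finset.le_sup (Finset.mem_range.2 hr)
  -- easy direction: limsup v ≤ limsup u
  have hge : Filter.limsup v atTop ≤ Filter.limsup u atTop := by
    rw [hvu]
    have hmap : Filter.map (fun k : ℕ => a * k) atTop ≤ atTop :=
      Filter.tendsto_atTop_mono (fun k => Nat.le_mul_of_pos_left k ha) tendsto_id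
    calc Filter.limsup (u ∘ fun k => a * k) atTop
        = Filter.limsup u (Filter.map (fun k : ℕ => a * k) atTop) := rfl
      _ ≤ Filter.limsup u atTop := limsup_le_limsup_of_le hmap
  -- ratio tendsto 1
  have T : Tendsto (fun k : ℕ => (((k + Q : ℕ) : ℝ≥0∞) / (k : ℝ≥0∞)) ^ d) atTop (𝓝 1) := by
    have h2 : Tendsto (fun k : ℕ => (Q : ℝ≥0∞) * ((k : ℕ) : ℝ≥0∞)⁻¹) atTop (𝓝 0) := by
      simpa using ENNReal.Tendsto.const_mul ENNReal.tendsto_inv_nat_nhds_zero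
        (Or.inr (ENNReal.natCast_ne_top Q))
    have h1 : Tendsto (fun k : ℕ => 1 + (Q : ℝ≥0∞) * ((k : ℕ) : ℝ≥0∞)⁻¹) atTop (𝓝 1) := by
      simpa using tendsto_const_nhds.add h2
    have h3 := ENNReal.Tendsto.pow (n := d) h1
    rw [one_pow] at h3
    apply Tendsto.congr' _ h3
    filter_upwards [Filter.eventually_ge_atTop 1] with k hk
    have hk0 : ((k : ℕ) : ℝ≥0∞) ≠ 0 := by
      exact_mod_cast Nat.cast_ne_zero.2 (Nat.one_le_iff_ne_zero.1 hk)
    have hkt : ((k : ℕ) : ℝ≥0∞) ≠ ⊤ := ENNReal.natCast_ne_top k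
    congr 1
    push_cast
    rw [ENNReal.add_div, ENNReal.div_self hk0 hkt, div_eq_mul_inv]
  -- hard direction
  have hle : Filter.limsup u atTop ≤ Filter.limsup v atTop := by
    apply le_of_forall_gt_imp_ge_of_dense
    intro b hb
    obtain ⟨c, hc1, hc2⟩ := exists_between hb
    have hc_ne_top : c ≠ ⊤ := hc2.ne_top
    have hρ : 1 < b / c := by
      rw [ENNReal.lt_div_iff_mul_lt (Or.inr ENNReal.one_ne_top) (Or.inr one_ne_zero), one_mul]
      exact hc2
    have hev1 : ∀ᶠ k in atTop, v k < c := eventually_lt_of_limsup_lt hc1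
    have hev2 : ∀ᶠ k in atTop, (((k + Q : ℕ) : ℝ≥0∞) / (k : ℝ≥0∞)) ^ d < b / c :=
      T.eventually_lt_const hρ
    obtain ⟨K₁, hK₁⟩ := Filter.eventually_atTop.1 hev1
    obtain ⟨K₂, hK₂⟩ := Filter.eventually_atTop.1 hev2
    set K := max (max K₁ K₂) 1 with hK
    apply limsup_le_of_le (by isBoundedDefault)
    filter_upwards [Filter.eventually_ge_atTop (K * a)] with m hm
    set k := m / a with hk
    set r := m % a with hr
    have hkK : K ≤ k := (Nat.le_div_iff_mul_le ha).2 hm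
    have hk1 : 1 ≤ k := le_trans (le_max_right _ _) hkK
    have hkK₁ : K₁ ≤ k := le_trans (le_trans (le_max_left _ _) (le_max_left _ _)) hkK
    have hkK₂ : K₂ ≤ k := le_trans (le_trans (le_max_right _ _) (le_max_left _ _)) hkK
    have hra : r < a := Nat.mod_lt _ ha
    have hmeq : m = k * a + r := by
      rw [hk, hr, Nat.mul_comm, Nat.div_add_mod]
    rcases Nat.eq_zero_or_pos r with hr0 | hr0
    · -- m is a multiple of a
      have hma : m = a * k := by rw [hmeq, hr0]; ring
      have hvk := hK₁ k hkK₁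
      calc u m = v k := by rw [hv, hu]; simp only; rw [hma]
        _ ≤ b := le_of_lt (lt_trans hvk hc2)
    · -- general case
      have hspec := hg r hr0 k
      have hfle : f m ≤ f ((k + g r) * a) := by
        rw [hmeq]; exact hspec.2
      have hden_pos : (0:ℕ) < k * a := Nat.mul_pos hk1 ha
      have hka_le : k * a ≤ m := hmeq ▸ Nat.le_add_right _ _
      -- step 1 : u m ≤ f((k+g r)*a) / (k*a)^d
      have step1 : u m ≤ (f ((k + g r) * a) : ℝ≥0∞) / ((k * a : ℕ) : ℝ≥0∞) ^ d := by
        apply ENNReal.div_le_div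
        · exact_mod_cast hfle
        · exact pow_le_pow_left₀ zero_le (by exact_mod_cast hka_le) d
      set y : ℝ≥0∞ := (((k + g r) * a : ℕ) : ℝ≥0∞) ^ d with hy
      have hy0 : y ≠ 0 := by
        rw [hy]
        apply pow_ne_zero
        exact Nat.cast_ne_zero.2 (Nat.mul_pos (by omega) ha).ne'
      have hyt : y ≠ ⊤ := by
        rw [hy]
        exact ENNReal.pow_ne_top (ENNReal.natCast_ne_top _)
      have step2 : (f ((k + g r) * a) : ℝ≥0∞) / ((k * a : ℕ) : ℝ≥0∞) ^ d
          = v (k + g r) * (y / ((k * a : ℕ) : ℝ≥0∞) ^ d) := by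
        rw [div_intro _ y _ hy0 hyt, hv, hy]
        simp only
        rw [mul_comm a (k + g r)]
      have hratio : y / ((k * a : ℕ) : ℝ≥0∞) ^ d
          ≤ (((k + Q : ℕ) : ℝ≥0∞) / ((k : ℕ) : ℝ≥0∞)) ^ d := by
        rw [hy, ennreal_div_pow]
        apply pow_le_pow_left₀ zero_le
        push_cast
        rw [ENNReal.mul_div_mul_right _ _ (Nat.cast_ne_zero.2 ha.ne')
          (ENNReal.natCast_ne_top a)]
        exact ENNReal.div_le_div (by gcongr; exact_mod_cast hgQ r hra) le_rfl
      have hvlt : v (k + g r) < c := hK₁ (k + g r) (le_trans hkK₁ (Nat.le_add_right _ _))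
      have hrlt : (((k + Q : ℕ) : ℝ≥0∞) / ((k : ℕ) : ℝ≥0∞)) ^ d < b / c := hK₂ k hkK₂
      calc u m ≤ (f ((k + g r) * a) : ℝ≥0∞) / ((k * a : ℕ) : ℝ≥0∞) ^ d := step1
        _ = v (k + g r) * (y / ((k * a : ℕ) : ℝ≥0∞) ^ d) := step2
        _ ≤ c * (b / c) := mul_le_mul' hvlt.le (le_trans hratio hrlt.le)
        _ ≤ b := ENNReal.mul_div_le
  exact le_antisymm hle hge
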